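/- arXiv:2206.08827 — 5 statements merged into one kernel-verified Lean document; each statement's English description precedes it below -/
import Mathlib

section
/- Let K be an algebraically closed field and p ∈ K⟨x_1,...,x_n⟩ a non-commutative polynomial with zero constant term such that p does not vanish identically on K (i.e., there exist scalars c_1,...,c_n ∈ K with p(c_1,...,c_n) ≠ 0). Then every m×m upper triangular matrix over K with pairwise distinct diagonal entries lies in the image of p evaluated on T_m(K)^n. -/
/-!
Since `p(0) = 0` and `p(c) ≠ 0`, the one-variable polynomial `t ↦ p(t • c)` is nonconstant, so over
the algebraically closed field `K` every scalar is a value of `p`; choose `c_j` with `p(c_j) = A j j`.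
By Cayley–Hamilton, `A` is annihilated by `∏ j, (X - A j j)`, a product of distinct linear factors,
so for polynomials `f` the matrix `f(A)` only depends on the values `f(A j j)`. Let `q_k` interpolate
`j ↦ c_j k` at the nodes `A j j` and put `u_k = q_k(A)`, an upper triangular matrix. Then
`p(q)` and `X` agree at every node, hence `p(u) = p(q)(A) = A`.
-/

open Polynomial

theorem FreeAlgebra.aeval_lift {R A σ : Type*} [CommSemiring R] [Semiring A] [Algebra R A]
    (a : A) (q : σ → R[X]) (p : FreeAlgebra R σ) :
    aeval a (lift R q p) = lift R (fun i => aeval a (q i)) p := by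
  rw [← AlgHom.comp_apply]
  congr 1
  ext i
  simp

theorem FreeAlgebra.exists_lift_eq_of_isAlgClosed {K σ : Type*} [Field K] [IsAlgClosed K]
    {p : FreeAlgebra K σ} (h0 : lift K (0 : σ → K) p = 0) {c : σ → K} (hc : lift K c p ≠ 0)
    (a : K) : ∃ c : σ → K, lift K c p = a := by
  set q : K[X] := lift K (fun i => C (c i) * X) p
  have hq : ∀ t, q.eval t = lift K (fun i => c i * t) p := fun t => by
    simp [q, ← coe_aeval_eq_eval, FreeAlgebra.aeval_lift]
  have hdeg : 0 < q.degree := by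
    by_contra! h
    have h1 := hq 1
    have h0' := hq 0
    rw [eq_C_of_degree_le_zero h] at h1 h0'
    simp only [eval_C, mul_one, mul_zero] at h1 h0'
    exact hc (h1 ▸ h0' ▸ h0)
  obtain ⟨t, ht⟩ := IsAlgClosed.exists_root (q - C a) (degree_sub_C hdeg ▸ hdeg.ne')
  exact ⟨fun i => c i * t, by rw [← hq]; simpa [sub_eq_zero] using ht⟩

namespace Lagrange

theorem nodal_dvd_of_eval_eq_zero {F ι : Type*} [Field F] {s : Finset ι} {v : ι → F}
    (hvs : Set.InjOn v s) {f : F[X]} (hf : ∀ i ∈ s, f.eval (v i) = 0) : nodal s v ∣ f := by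
  rw [nodal_eq]
  refine Finset.prod_dvd_of_coprime (fun i hi j hj hij => ?_)
    fun i hi => dvd_iff_isRoot.mpr (hf i hi)
  exact isCoprime_X_sub_C_of_isUnit_sub (sub_ne_zero_of_ne (hvs.ne hi hj hij)).isUnit

theorem aeval_eq_of_eval_eq {F ι A : Type*} [Field F] [Ring A] [Algebra F A] {s : Finset ι}
    {v : ι → F} (hvs : Set.InjOn v s) {a : A} (ha : aeval a (nodal s v) = 0) {f g : F[X]}
    (hfg : ∀ i ∈ s, f.eval (v i) = g.eval (v i)) : aeval a f = aeval a g := by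
  obtain ⟨h, hh⟩ := nodal_dvd_of_eval_eq_zero hvs (f := f - g) fun i hi => by simp [hfg i hi]
  rw [← sub_eq_zero, ← map_sub, hh, map_mul, ha, zero_mul]

end Lagrange

theorem FreeAlgebra.exists_aeval_lift_eq_self {K σ ι A : Type*} [Field K] [Ring A] [Algebra K A]
    [Fintype ι] {p : FreeAlgebra K σ} (hp : ∀ x : K, ∃ c : σ → K, lift K c p = x)
    {v : ι → K} (hv : Function.Injective v) {a : A}
    (ha : aeval a (Lagrange.nodal Finset.univ v) = 0) :
    ∃ q : σ → K[X], aeval a (lift K q p) = a := by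
  classical
  choose c hc using fun i => hp (v i)
  refine ⟨fun k => Lagrange.interpolate Finset.univ v (fun i => c i k), ?_⟩
  conv_rhs => rw [← aeval_X (R := K) a]
  refine Lagrange.aeval_eq_of_eval_eq hv.injOn ha fun i _ => ?_
  simp only [← coe_aeval_eq_eval, aeval_lift, aeval_X]
  simp only [coe_aeval_eq_eval, Lagrange.eval_interpolate_at_node _ hv.injOn (Finset.mem_univ i),
    hc]

theorem Matrix.BlockTriangular.aeval {R n α : Type*} [CommRing R] [Fintype n] [DecidableEq n]
    [LinearOrder α] {M : Matrix n n R} {b : n → α} (hM : M.BlockTriangular b) (f : R[X]) :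
    (aeval M f).BlockTriangular b :=
  Algebra.adjoin_le (s := {M}) (S := blockTriangularSubalgebra R R b)
    (Set.singleton_subset_iff.mpr hM) (aeval_mem_adjoin_singleton R M)

theorem stmt8 {K : Type*} [Field K] [IsAlgClosed K] {n m : ℕ}
    (p : FreeAlgebra K (Fin n))
    (h0 : (FreeAlgebra.lift K (fun _ : Fin n => (0 : K))) p = 0)
    (hK : ∃ c : Fin n → K, (FreeAlgebra.lift K c) p ≠ 0)
    (A : Matrix (Fin m) (Fin m) K) (hA : A.BlockTriangular id)
    (hdiag : ∀ i j : Fin m, i ≠ j → A i i ≠ A j j) :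
    ∃ u : Fin n → Matrix (Fin m) (Fin m) K,
      (∀ i, (u i).BlockTriangular id) ∧ (FreeAlgebra.lift K u) p = A := by
  obtain ⟨c, hc⟩ := hK
  have hnodal : aeval A (Lagrange.nodal Finset.univ fun j => A j j) = 0 := by
    rw [Lagrange.nodal_eq, ← Matrix.charpoly_of_isUpperTriangular A hA,
      Matrix.aeval_self_charpoly]
  obtain ⟨q, hq⟩ := FreeAlgebra.exists_aeval_lift_eq_self
    (FreeAlgebra.exists_lift_eq_of_isAlgClosed h0 hc) (fun i j => not_imp_not.mp (hdiag i j))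
    hnodal
  exact ⟨fun i => aeval A (q i), fun i => hA.aeval (q i), by rw [← FreeAlgebra.aeval_lift, hq]⟩
end

section
/- Let K be a field and let p ∈ K⟨x_1,...,x_n⟩ be a polynomial with zero constant term that vanishes identically on T_t(K) (i.e., is a polynomial identity of t×t upper triangular matrices). Then for any m ≥ t, the image p(T_m(K)) is contained in T_m(K)^{(t-1)}, the set of upper triangular matrices whose (i,j) entry vanishes whenever j - i ≤ t - 1. -/
/-!
Restricting an upper triangular `m × m` matrix to the rows and columns of a window of `t`
consecutive indices is multiplicative on upper triangular matrices, since a product entry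
`(A * B) k l` only involves indices between `k` and `l`. It is therefore an algebra homomorphism
from `T_m(K)` to `T_t(K)` and commutes with evaluating `p`, so `p(u)` vanishes on every
`t × t` diagonal window. Every entry `(i, j)` with `0 ≤ j - i < t` lies in such a window, and
entries below the diagonal vanish by triangularity.
-/

namespace FreeAlgebra

variable {R X A B : Type*} [CommSemiring R] [Semiring A] [Algebra R A] [Semiring B] [Algebra R B]

theorem comp_lift (φ : A →ₐ[R] B) (u : X → A) : φ.comp (lift R u) = lift R (φ ∘ u) := by
  ext
  simp

theorem lift_codRestrict {S : Subalgebra R A} (u : X → A) (hu : ∀ x, u x ∈ S)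
    (p : FreeAlgebra R X) : (lift R (fun x => (⟨u x, hu x⟩ : S)) p : A) = lift R u p :=
  DFunLike.congr_fun (comp_lift S.val _) p

theorem lift_mem {S : Subalgebra R A} {u : X → A} (hu : ∀ x, u x ∈ S) (p : FreeAlgebra R X) :
    lift R u p ∈ S :=
  lift_codRestrict u hu p ▸ Subtype.prop _

end FreeAlgebra

namespace Matrix

variable {ι κ R : Type*} [LinearOrder ι] [LinearOrder κ]

theorem BlockTriangular.submatrix_orderEmbedding [Zero R] {M : Matrix ι ι R}
    (hM : M.BlockTriangular id) (e : κ ↪o ι) : (M.submatrix e e).BlockTriangular id :=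
  fun _ _ h => hM (e.lt_iff_lt.mpr h)

theorem submatrix_mul_of_ordConnected [Fintype ι] [Fintype κ] [NonUnitalNonAssocSemiring R]
    {A B : Matrix ι ι R} (hA : A.BlockTriangular id) (hB : B.BlockTriangular id) (e : κ ↪o ι)
    (he : (Set.range e).OrdConnected) :
    (A * B).submatrix e e = A.submatrix e e * B.submatrix e e := by
  ext a b
  simp only [submatrix_apply, mul_apply]
  refine .trans ?_ (Finset.sum_map Finset.univ e.toEmbedding fun k => A (e a) k * B k (e b))
  refine (Finset.sum_subset (Finset.subset_univ _) fun k _ hk => ?_).symm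
  have hk : k ∉ Set.Icc (e a) (e b) := fun hk' =>
    hk (by simpa using he.out (Set.mem_range_self a) (Set.mem_range_self b) hk')
  rcases not_and_or.mp hk with hak | hkb
  · rw [hA (not_le.mp hak), zero_mul]
  · rw [hB (not_le.mp hkb), mul_zero]

variable (R) in
def submatrixAlgHom [Fintype ι] [Fintype κ] [DecidableEq ι] [DecidableEq κ] [CommSemiring R]
    (e : κ ↪o ι) (he : (Set.range e).OrdConnected) :
    blockTriangularSubalgebra R R (id : ι → ι) →ₐ[R] Matrix κ κ R where
  toFun A := (A : Matrix ι ι R).submatrix e e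
  map_one' := submatrix_one_embedding e.toEmbedding
  map_mul' A B := submatrix_mul_of_ordConnected A.2 B.2 e he
  map_zero' := rfl
  map_add' _ _ := rfl
  commutes' r := by
    simp only [Subalgebra.coe_algebraMap, algebraMap_eq_diagonal]
    exact submatrix_diagonal_embedding _ e.toEmbedding

end Matrix

theorem Fin.exists_orderEmbedding_ordConnected_mem_range {t m : ℕ} (htm : t ≤ m) {i j : Fin m}
    (hij : i ≤ j) (hjit : (j : ℕ) - i < t) :
    ∃ e : Fin t ↪o Fin m,
      (Set.range e).OrdConnected ∧ i ∈ Set.range e ∧ j ∈ Set.range e := by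
  -- the window starts at `i`, shifted left when it would run past `m`
  set s := min (i : ℕ) (m - t)
  let e : Fin t ↪o Fin m :=
    .ofStrictMono (fun a => ⟨s + a, by omega⟩) fun _ _ h =>
      Fin.mk_lt_mk.mpr (Nat.add_lt_add_left h s)
  have e_val (a : Fin t) : (e a : ℕ) = s + a := rfl
  have mem_range (k : Fin m) (hsk : s ≤ k) (hkt : (k : ℕ) < s + t) : k ∈ Set.range e :=
    ⟨⟨k - s, by omega⟩, Fin.ext (by rw [e_val, Fin.val_mk]; omega)⟩
  refine ⟨e, ⟨?_⟩, mem_range i (by omega) (by omega), mem_range j ?_ (by omega)⟩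
  · rintro _ ⟨a, rfl⟩ _ ⟨b, rfl⟩ k ⟨hak, hkb⟩
    rw [Fin.le_def, e_val] at hak hkb
    exact mem_range k (by omega) (by omega)
  · rw [Fin.le_def] at hij
    omega

theorem stmt10_general {K : Type*} [Field K] {n t m : ℕ} (ht : 1 ≤ t) (htm : t ≤ m)
    (p : FreeAlgebra K (Fin n))
    (hid : ∀ u : Fin n → Matrix (Fin t) (Fin t) K,
      (∀ i, (u i).BlockTriangular id) → (FreeAlgebra.lift K u) p = 0) :
    ∀ u : Fin n → Matrix (Fin m) (Fin m) K,
      (∀ i, (u i).BlockTriangular id) →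
      ∀ i j : Fin m, (j : ℕ) - (i : ℕ) ≤ t - 1 →
        (FreeAlgebra.lift K u) p i j = 0 := by
  intro u hu i j hij
  rcases lt_or_ge j i with hji | hij'
  · exact FreeAlgebra.lift_mem (S := Matrix.blockTriangularSubalgebra K K id) hu p hji
  obtain ⟨e, he, ⟨a, rfl⟩, ⟨b, rfl⟩⟩ :=
    Fin.exists_orderEmbedding_ordConnected_mem_range htm hij' (by omega)
  let φ := Matrix.submatrixAlgHom K e he
  let u' : Fin n → Matrix.blockTriangularSubalgebra K K id := fun k => ⟨u k, hu k⟩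
  have hφ : φ (FreeAlgebra.lift K u' p) = 0 :=
    (DFunLike.congr_fun (FreeAlgebra.comp_lift φ u') p).trans
      (hid _ fun k => (hu k).submatrix_orderEmbedding e)
  rw [← FreeAlgebra.lift_codRestrict (S := Matrix.blockTriangularSubalgebra K K id) u hu]
  exact congrFun₂ hφ a b

theorem stmt10 {K : Type*} [Field K] {n t m : ℕ} (ht : 1 ≤ t) (htm : t ≤ m)
    (p : FreeAlgebra K (Fin n))
    (h0 : (FreeAlgebra.lift K (fun _ : Fin n => (0 : K))) p = 0)
    (hid : ∀ u : Fin n → Matrix (Fin t) (Fin t) K,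
      (∀ i, (u i).BlockTriangular id) → (FreeAlgebra.lift K u) p = 0) :
    ∀ u : Fin n → Matrix (Fin m) (Fin m) K,
      (∀ i, (u i).BlockTriangular id) →
      ∀ i j : Fin m, (j : ℕ) - (i : ℕ) ≤ t - 1 →
        (FreeAlgebra.lift K u) p i j = 0 :=
  stmt10_general ht htm p hid
end

section
/- Let K be a field with at least 2m elements. The polynomial [x_1,x_2][x_3,x_4]⋯[x_{2m-1},x_{2m}] (product of m commutators) is a polynomial identity of T_m(K): for any m×m upper triangular matrices u_1,...,u_{2m} over K, the product (u_1u_2 - u_2u_1)(u_3u_4 - u_4u_3)⋯(u_{2m-1}u_{2m} - u_{2m}u_{2m-1}) is the zero matrix. -/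
open Matrix Finset

/-- Strictness predicate: `M i j = 0` whenever `j < i + t`. -/
private def Strict {K : Type*} [Field K] {m : ℕ} (t : ℕ) (M : Matrix (Fin m) (Fin m) K) : Prop :=
  ∀ i j : Fin m, (j : ℕ) < (i : ℕ) + t → M i j = 0

private lemma diag_mul {K : Type*} [Field K] {m : ℕ} {A B : Matrix (Fin m) (Fin m) K}
    (hA : A.BlockTriangular id) (hB : B.BlockTriangular id) (i : Fin m) :
    (A * B) i i = A i i * B i i := by
  rw [Matrix.mul_apply]
  refine Finset.sum_eq_single i (fun k _ hk => ?_) (by simp)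
  rcases lt_or_gt_of_ne hk with h | h
  · rw [hA (show (id k : Fin m) < id i from h), zero_mul]
  · rw [hB (show (id i : Fin m) < id k from h), mul_zero]

private lemma strict_one {K : Type*} [Field K] {m : ℕ} {A B : Matrix (Fin m) (Fin m) K}
    (hA : A.BlockTriangular id) (hB : B.BlockTriangular id) :
    Strict 1 (A * B - B * A) := by
  intro i j hij
  have hle : j ≤ i := Fin.le_def.mpr (by omega)
  rcases eq_or_lt_of_le hle with h | h
  · subst h
    simp [Matrix.sub_apply, diag_mul hA hB, diag_mul hB hA, mul_comm]
  · have h1 : (A * B) i j = 0 := (hA.mul hB) (show (id j : Fin m) < id i from h)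
    have h2 : (B * A) i j = 0 := (hB.mul hA) (show (id j : Fin m) < id i from h)
    simp [Matrix.sub_apply, h1, h2]

private lemma strict_mul {K : Type*} [Field K] {m : ℕ} {a b : ℕ}
    {M N : Matrix (Fin m) (Fin m) K} (hM : Strict a M) (hN : Strict b N) :
    Strict (a + b) (M * N) := by
  intro i j hij
  rw [Matrix.mul_apply]
  refine Finset.sum_eq_zero fun k _ => ?_
  by_cases h : (k : ℕ) < (i : ℕ) + a
  · rw [hM i k h, zero_mul]
  · rw [hN k j (by omega), mul_zero]

private lemma strict_prod {K : Type*} [Field K] {m : ℕ} (L : List (Matrix (Fin m) (Fin m) K))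
    (hL : ∀ M ∈ L, Strict 1 M) : Strict L.length L.prod := by
  induction L with
  | nil =>
      intro i j hij
      simp only [List.length_nil, Nat.add_zero] at hij
      have hne : i ≠ j := by intro h; subst h; omega
      simp [Matrix.one_apply, hne]
  | cons M L ih =>
      simp only [List.prod_cons, List.length_cons]
      have : Strict (1 + L.length) (M * L.prod) :=
        strict_mul (hL M (by simp)) (ih fun N hN => hL N (by simp [hN]))
      simpa [Nat.add_comm] using this

theorem stmt11 {K : Type*} [Field K] {m : ℕ}
    (hK : (2 * m : Cardinal) ≤ Cardinal.mk K)
    (u : Fin (2 * m) → Matrix (Fin m) (Fin m) K)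
    (hu : ∀ i, (u i).BlockTriangular id) :
    (List.ofFn fun i : Fin m =>
      u ⟨2 * i.val, by have := i.isLt; omega⟩ *
        u ⟨2 * i.val + 1, by have := i.isLt; omega⟩ -
      u ⟨2 * i.val + 1, by have := i.isLt; omega⟩ *
        u ⟨2 * i.val, by have := i.isLt; omega⟩).prod = 0 := by
  set L := (List.ofFn fun i : Fin m =>
      u ⟨2 * i.val, by have := i.isLt; omega⟩ *
        u ⟨2 * i.val + 1, by have := i.isLt; omega⟩ -
      u ⟨2 * i.val + 1, by have := i.isLt; omega⟩ *
        u ⟨2 * i.val, by have := i.isLt; omega⟩) with hLdef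
  have hlen : L.length = m := by simp [hLdef]
  have hstrict : Strict L.length L.prod := by
    refine strict_prod L fun M hM => ?_
    rw [hLdef, List.mem_ofFn] at hM
    obtain ⟨i, rfl⟩ := hM
    exact strict_one (hu _) (hu _)
  rw [hlen] at hstrict
  ext i j
  exact hstrict i j (by omega)
end

section
/- Let K be a field of characteristic not 2 with at least 3 elements, m = 5, and p(x_1, x_2) = (x_1x_2 - x_2x_1)^2. Then p is a polynomial identity of T_2(K), p is not a polynomial identity of T_3(K) (so ord(p) = 2), but the image p(T_5(K)) is strictly contained in T_5(K)^{(1)}: specifically, the matrix E_{13} + E_{35} (with 1 in positions (1,3) and (3,5), zeros elsewhere) lies in T_5(K)^{(1)} but not in p(T_5(K)). -/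
theorem stmt13 {K : Type*} [Field K] (h2 : (2 : K) ≠ 0)
    (h3 : (3 : Cardinal) ≤ Cardinal.mk K) :
    (∀ u₁ u₂ : Matrix (Fin 2) (Fin 2) K,
        u₁.BlockTriangular id → u₂.BlockTriangular id →
        (u₁ * u₂ - u₂ * u₁) ^ 2 = 0) ∧
    (∃ u₁ u₂ : Matrix (Fin 3) (Fin 3) K,
        u₁.BlockTriangular id ∧ u₂.BlockTriangular id ∧
        (u₁ * u₂ - u₂ * u₁) ^ 2 ≠ 0) ∧
    (∀ i j : Fin 5, (j : ℕ) ≤ (i : ℕ) + 1 →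
        (Matrix.single (0 : Fin 5) (2 : Fin 5) (1 : K) +
          Matrix.single (2 : Fin 5) (4 : Fin 5) (1 : K)) i j = 0) ∧
    (∀ X₁ X₂ : Matrix (Fin 5) (Fin 5) K,
        X₁.BlockTriangular id → X₂.BlockTriangular id →
        (X₁ * X₂ - X₂ * X₁) ^ 2 ≠
          Matrix.single (0 : Fin 5) (2 : Fin 5) (1 : K) +
            Matrix.single (2 : Fin 5) (4 : Fin 5) (1 : K)) := by
  refine ⟨?_, ?_, ?_, ?_⟩
  · intro u₁ u₂ h₁ h₂
    have a := h₁ (show id (0 : Fin 2) < id 1 by decide)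
    have b := h₂ (show id (0 : Fin 2) < id 1 by decide)
    ext i j
    fin_cases i <;> fin_cases j <;>
      simp [pow_two, Matrix.mul_apply, Matrix.sub_apply, Fin.sum_univ_two, a, b] <;> ring
  · refine ⟨!![0,1,0;0,0,1;0,0,0], !![0,0,0;0,1,0;0,0,2], ?_, ?_, ?_⟩
    · intro i j hij; fin_cases i <;> fin_cases j <;>
        simp_all [Matrix.vecHead, Matrix.vecTail]
    · intro i j hij; fin_cases i <;> fin_cases j <;>
        simp_all [Matrix.vecHead, Matrix.vecTail]
    · intro h
      have := Matrix.ext_iff.mpr h 0 2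
      norm_num [pow_two, Matrix.mul_apply, Matrix.sub_apply, Fin.sum_univ_three,
        Matrix.cons_val_two, Matrix.vecHead, Matrix.vecTail] at this
  · intro i j hij
    fin_cases i <;> fin_cases j <;>
      simp_all [Matrix.add_apply, Matrix.single]
  · intro X₁ X₂ h₁ h₂ h
    have p10 : X₁ 1 0 = 0 := h₁ (by decide)
    have p20 : X₁ 2 0 = 0 := h₁ (by decide)
    have p21 : X₁ 2 1 = 0 := h₁ (by decide)
    have p30 : X₁ 3 0 = 0 := h₁ (by decide)
    have p31 : X₁ 3 1 = 0 := h₁ (by decide)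
    have p32 : X₁ 3 2 = 0 := h₁ (by decide)
    have p40 : X₁ 4 0 = 0 := h₁ (by decide)
    have p41 : X₁ 4 1 = 0 := h₁ (by decide)
    have p42 : X₁ 4 2 = 0 := h₁ (by decide)
    have p43 : X₁ 4 3 = 0 := h₁ (by decide)
    have q10 : X₂ 1 0 = 0 := h₂ (by decide)
    have q20 : X₂ 2 0 = 0 := h₂ (by decide)
    have q21 : X₂ 2 1 = 0 := h₂ (by decide)
    have q30 : X₂ 3 0 = 0 := h₂ (by decide)
    have q31 : X₂ 3 1 = 0 := h₂ (by decide)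
    have q32 : X₂ 3 2 = 0 := h₂ (by decide)
    have q40 : X₂ 4 0 = 0 := h₂ (by decide)
    have q41 : X₂ 4 1 = 0 := h₂ (by decide)
    have q42 : X₂ 4 2 = 0 := h₂ (by decide)
    have q43 : X₂ 4 3 = 0 := h₂ (by decide)
    set C := X₁ * X₂ - X₂ * X₁ with hC
    have hCz : ∀ i j : Fin 5, (j : ℕ) ≤ (i : ℕ) → C i j = 0 := by
      intro i j hij
      rw [hC]
      fin_cases i <;> fin_cases j <;>
        first
          | exact absurd hij (by decide)
          | (simp [Matrix.sub_apply, Matrix.mul_apply, Fin.sum_univ_five,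
              p10, p20, p21, p30, p31, p32, p40, p41, p42, p43,
              q10, q20, q21, q30, q31, q32, q40, q41, q42, q43]
             <;> ring)
    have c00 : C 0 0 = 0 := hCz 0 0 (by decide)
    have c22 : C 2 2 = 0 := hCz 2 2 (by decide)
    have c32 : C 3 2 = 0 := hCz 3 2 (by decide)
    have c42 : C 4 2 = 0 := hCz 4 2 (by decide)
    have c10 : C 1 0 = 0 := hCz 1 0 (by decide)
    have c11 : C 1 1 = 0 := hCz 1 1 (by decide)
    have c33 : C 3 3 = 0 := hCz 3 3 (by decide)
    have c43 : C 4 3 = 0 := hCz 4 3 (by decide)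
    have c20 : C 2 0 = 0 := hCz 2 0 (by decide)
    have c21 : C 2 1 = 0 := hCz 2 1 (by decide)
    have c44 : C 4 4 = 0 := hCz 4 4 (by decide)
    have e02 := Matrix.ext_iff.mpr h 0 2
    have e13 := Matrix.ext_iff.mpr h 1 3
    have e24 := Matrix.ext_iff.mpr h 2 4
    rw [pow_two] at e02 e13 e24
    simp [Matrix.mul_apply, Fin.sum_univ_five, Matrix.add_apply, Matrix.single,
      c00, c22, c32, c42, c10, c11, c33, c43, c20, c21, c44] at e02 e13 e24
    rcases e13 with h' | h'
    · rw [h', mul_zero] at e02; exact zero_ne_one e02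
    · rw [h', zero_mul] at e24; exact zero_ne_one e24
end

section
/- Let K be an algebraically closed field, m ≥ 2, and p ∈ K⟨x_1,...,x_n⟩ with zero constant term such that p vanishes identically on T_{m-1}(K) but not on T_m(K) (i.e., ord(p) = m-1). Then p(T_m(K)) = T_m(K)^{(m-2)}, i.e., the image of p on m×m upper triangular matrices is exactly the set of matrices whose only possibly nonzero entry is in position (1,m). -/
section Aux

variable {K : Type*} [Field K] {n k : ℕ}

private lemma subm_hom (f : Fin (k + 1) → Fin (k + 2)) (hmono : StrictMono f)
    (hmul : ∀ A B : Matrix (Fin (k + 2)) (Fin (k + 2)) K,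
      A.BlockTriangular id → B.BlockTriangular id →
      (A * B).submatrix f f = A.submatrix f f * B.submatrix f f)
    (u : Fin n → Matrix (Fin (k + 2)) (Fin (k + 2)) K)
    (hu : ∀ i, (u i).BlockTriangular id) (p : FreeAlgebra K (Fin n)) :
    ((FreeAlgebra.lift K u) p).BlockTriangular id ∧
      ((FreeAlgebra.lift K u) p).submatrix f f =
        (FreeAlgebra.lift K (fun i => (u i).submatrix f f)) p := by
  induction p with
  | grade0 r =>
      constructor
      · rw [AlgHom.commutes, Algebra.algebraMap_eq_smul_one]
        intro i j h
        simp only [Matrix.smul_apply, Matrix.one_apply, smul_eq_mul]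
        rw [if_neg (by rintro rfl; exact lt_irrefl _ h), mul_zero]
      · rw [AlgHom.commutes, AlgHom.commutes]
        ext a b
        simp only [Matrix.submatrix_apply, Matrix.algebraMap_matrix_apply]
        simp only [hmono.injective.eq_iff]
  | grade1 x =>
      simp only [FreeAlgebra.lift_ι_apply]
      exact ⟨hu x, trivial⟩
  | mul a b ha hb =>
      simp only [map_mul]
      exact ⟨ha.1.mul hb.1, by rw [hmul _ _ ha.1 hb.1, ha.2, hb.2]⟩
  | add a b ha hb =>
      simp only [map_add]
      refine ⟨ha.1.add hb.1, ?_⟩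
      rw [← ha.2, ← hb.2]
      ext a b
      simp [Matrix.submatrix_apply]

private lemma mul_castSucc (A B : Matrix (Fin (k + 2)) (Fin (k + 2)) K)
    (_ : A.BlockTriangular id) (hB : B.BlockTriangular id) :
    (A * B).submatrix Fin.castSucc Fin.castSucc =
      A.submatrix Fin.castSucc Fin.castSucc * B.submatrix Fin.castSucc Fin.castSucc := by
  ext a b
  rw [Matrix.submatrix_apply, Matrix.mul_apply, Matrix.mul_apply, Fin.sum_univ_castSucc]
  have : B (Fin.last (k + 1)) b.castSucc = 0 := hB (Fin.castSucc_lt_last b)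
  simp [this]

private lemma mul_succ (A B : Matrix (Fin (k + 2)) (Fin (k + 2)) K)
    (hA : A.BlockTriangular id) (_ : B.BlockTriangular id) :
    (A * B).submatrix Fin.succ Fin.succ =
      A.submatrix Fin.succ Fin.succ * B.submatrix Fin.succ Fin.succ := by
  ext a b
  rw [Matrix.submatrix_apply, Matrix.mul_apply, Matrix.mul_apply, Fin.sum_univ_succ]
  have : A a.succ 0 = 0 := hA (Fin.succ_pos a)
  simp [this]

private lemma subm_tri (f : Fin (k + 1) → Fin (k + 2)) (hmono : StrictMono f)
    {A : Matrix (Fin (k + 2)) (Fin (k + 2)) K} (hA : A.BlockTriangular id) :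
    (A.submatrix f f).BlockTriangular id := fun _ _ h => hA (hmono h)

private lemma entries_zero (p : FreeAlgebra K (Fin n))
    (hid : ∀ u : Fin n → Matrix (Fin (k + 1)) (Fin (k + 1)) K,
      (∀ i, (u i).BlockTriangular id) → (FreeAlgebra.lift K u) p = 0)
    (u : Fin n → Matrix (Fin (k + 2)) (Fin (k + 2)) K)
    (hu : ∀ i, (u i).BlockTriangular id) :
    ∀ i j : Fin (k + 2), ¬((i : ℕ) = 0 ∧ (j : ℕ) = k + 1) →
      (FreeAlgebra.lift K u) p i j = 0 := by
  obtain ⟨htri, hcast⟩ := subm_hom Fin.castSucc Fin.strictMono_castSucc mul_castSucc u hu p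
  obtain ⟨-, hsucc⟩ := subm_hom Fin.succ Fin.strictMono_succ mul_succ u hu p
  have hcast0 : ((FreeAlgebra.lift K u) p).submatrix Fin.castSucc Fin.castSucc = 0 := by
    rw [hcast]; exact hid _ fun i => subm_tri _ Fin.strictMono_castSucc (hu i)
  have hsucc0 : ((FreeAlgebra.lift K u) p).submatrix Fin.succ Fin.succ = 0 := by
    rw [hsucc]; exact hid _ fun i => subm_tri _ Fin.strictMono_succ (hu i)
  intro i j hij
  by_cases hi : i = 0
  · have hj : j ≠ Fin.last (k + 1) := by
      intro h; exact hij ⟨by simp [hi], by simp [h]⟩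
    obtain ⟨j', rfl⟩ := Fin.exists_castSucc_eq.2 hj
    have := congrFun (congrFun hcast0 0) j'
    simpa [hi] using this
  · by_cases hj : j = 0
    · exact htri (by simpa [hj] using Fin.pos_of_ne_zero hi)
    · obtain ⟨i', rfl⟩ := Fin.exists_succ_eq.2 hi
      obtain ⟨j', rfl⟩ := Fin.exists_succ_eq.2 hj
      exact congrFun (congrFun hsucc0 i') j'

private lemma lift_conj (D D' : Matrix (Fin (k + 2)) (Fin (k + 2)) K)
    (h1 : D * D' = 1) (h2 : D' * D = 1)
    (u : Fin n → Matrix (Fin (k + 2)) (Fin (k + 2)) K) (p : FreeAlgebra K (Fin n)) :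
    (FreeAlgebra.lift K (fun i => D * u i * D')) p =
      D * (FreeAlgebra.lift K u) p * D' := by
  induction p with
  | grade0 r =>
      rw [AlgHom.commutes, AlgHom.commutes, Algebra.algebraMap_eq_smul_one,
        Matrix.mul_smul, Matrix.smul_mul, mul_one, h1]
  | grade1 x => simp [FreeAlgebra.lift_ι_apply]
  | mul a b ha hb =>
      rw [map_mul, map_mul, ha, hb]
      calc D * (FreeAlgebra.lift K u) a * D' * (D * (FreeAlgebra.lift K u) b * D')
          = D * (FreeAlgebra.lift K u) a * (D' * D) * ((FreeAlgebra.lift K u) b * D') := by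
            noncomm_ring
        _ = D * ((FreeAlgebra.lift K u) a * (FreeAlgebra.lift K u) b) * D' := by
            rw [h2, mul_one]; noncomm_ring
  | add a b ha hb =>
      rw [map_add, map_add, ha, hb, Matrix.mul_add, Matrix.add_mul]

private lemma lift_zero (p : FreeAlgebra K (Fin n))
    (h0 : (FreeAlgebra.lift K (fun _ : Fin n => (0 : K))) p = 0) :
    (FreeAlgebra.lift K (fun _ : Fin n => (0 : Matrix (Fin (k + 2)) (Fin (k + 2)) K))) p = 0 := by
  have : (FreeAlgebra.lift K (fun _ : Fin n => (0 : Matrix (Fin (k + 2)) (Fin (k + 2)) K))) =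
      (Algebra.ofId K (Matrix (Fin (k + 2)) (Fin (k + 2)) K)).comp
        (FreeAlgebra.lift K (fun _ : Fin n => (0 : K))) := by
    apply FreeAlgebra.hom_ext
    funext x
    simp [Algebra.ofId_apply]
  rw [this, AlgHom.comp_apply, h0, map_zero]

end Aux

theorem stmt19 {K : Type*} [Field K] [IsAlgClosed K] {n m : ℕ} (hm : 2 ≤ m)
    (p : FreeAlgebra K (Fin n))
    (h0 : (FreeAlgebra.lift K (fun _ : Fin n => (0 : K))) p = 0)
    (hid : ∀ u : Fin n → Matrix (Fin (m - 1)) (Fin (m - 1)) K,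
      (∀ i, (u i).BlockTriangular id) → (FreeAlgebra.lift K u) p = 0)
    (hnot : ∃ u : Fin n → Matrix (Fin m) (Fin m) K,
      (∀ i, (u i).BlockTriangular id) ∧ (FreeAlgebra.lift K u) p ≠ 0) :
    ∀ A : Matrix (Fin m) (Fin m) K,
      (∃ u : Fin n → Matrix (Fin m) (Fin m) K,
        (∀ i, (u i).BlockTriangular id) ∧ (FreeAlgebra.lift K u) p = A) ↔
      ∀ i j : Fin m, ¬((i : ℕ) = 0 ∧ (j : ℕ) = m - 1) → A i j = 0 := by
  obtain ⟨k, rfl⟩ : ∃ k, m = k + 2 := ⟨m - 2, by omega⟩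
  have hid' : ∀ u : Fin n → Matrix (Fin (k + 1)) (Fin (k + 1)) K,
      (∀ i, (u i).BlockTriangular id) → (FreeAlgebra.lift K u) p = 0 := hid
  intro A
  constructor
  · rintro ⟨u, hu, rfl⟩ i j hij
    exact entries_zero p hid' u hu i j (fun h => hij ⟨h.1, by omega⟩)
  · intro hA
    set c := A 0 (Fin.last (k + 1)) with hc
    by_cases hc0 : c = 0
    · refine ⟨fun _ => 0, fun i => Matrix.blockTriangular_zero, ?_⟩
      have hAz : A = 0 := by
        ext i j
        by_cases hij : (i : ℕ) = 0 ∧ (j : ℕ) = k + 1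
        · have hi : i = 0 := Fin.ext (by simpa using hij.1)
          have hj : j = Fin.last (k + 1) := Fin.ext (by simpa using hij.2)
          subst hi; subst hj
          simpa [← hc] using hc0
        · simpa using hA i j (fun h => hij ⟨h.1, by omega⟩)
      rw [hAz]
      exact lift_zero p h0
    · obtain ⟨u, hu, hne⟩ := hnot
      set B := (FreeAlgebra.lift K u) p with hB
      have hBz : ∀ i j : Fin (k + 2), ¬((i : ℕ) = 0 ∧ (j : ℕ) = k + 1) → B i j = 0 :=
        fun i j h => entries_zero p hid' u hu i j h
      set b := B 0 (Fin.last (k + 1)) with hb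
      have hb0 : b ≠ 0 := by
        intro h
        apply hne
        ext i j
        by_cases hij : (i : ℕ) = 0 ∧ (j : ℕ) = k + 1
        · have hi : i = 0 := Fin.ext (by simpa using hij.1)
          have hj : j = Fin.last (k + 1) := Fin.ext (by simpa using hij.2)
          subst hi; subst hj
          simpa [← hb] using h
        · simpa using hBz i j hij
      set d : Fin (k + 2) → K := fun t => if t = 0 then c / b else 1 with hd
      set d' : Fin (k + 2) → K := fun t => if t = 0 then b / c else 1 with hd'
      have hdd' : ∀ t, d t * d' t = 1 := by
        intro t
        by_cases ht : t = 0
        · simp only [hd, hd', if_pos ht]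
          field_simp
        · simp [hd, hd', ht]
      have hfun : (fun t => d t * d' t) = fun _ => (1 : K) := funext hdd'
      have h1 : Matrix.diagonal d * Matrix.diagonal d' = 1 := by
        rw [Matrix.diagonal_mul_diagonal]
        rw [show (fun t => d t * d' t) = fun _ => (1 : K) from hfun]
        exact Matrix.diagonal_one
      have h2 : Matrix.diagonal d' * Matrix.diagonal d = 1 := by
        rw [Matrix.diagonal_mul_diagonal]
        rw [show (fun t => d' t * d t) = fun _ => (1 : K) from
          funext fun t => by rw [mul_comm]; exact hdd' t]
        exact Matrix.diagonal_one
      refine ⟨fun i => Matrix.diagonal d * u i * Matrix.diagonal d', fun i => ?_, ?_⟩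
      · exact ((Matrix.blockTriangular_diagonal d).mul (hu i)).mul
          (Matrix.blockTriangular_diagonal d')
      · rw [lift_conj _ _ h1 h2, ← hB]
        ext i j
        rw [Matrix.mul_diagonal, Matrix.diagonal_mul]
        by_cases hij : (i : ℕ) = 0 ∧ (j : ℕ) = k + 1
        · have hi : i = 0 := Fin.ext (by simpa using hij.1)
          have hj : j = Fin.last (k + 1) := Fin.ext (by simpa using hij.2)
          subst hi; subst hj
          have hlast : (Fin.last (k + 1) : Fin (k + 2)) ≠ 0 := by
            simp [Fin.ext_iff]
          rw [← hb, ← hc]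
          simp only [hd, hd', if_pos rfl, if_neg hlast, mul_one]
          field_simp
        · rw [hBz i j hij, hA i j (fun h => hij ⟨h.1, by omega⟩)]
          ring
end
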